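/- With the setup of the ψ_ω automorphisms: if ω₁ < ω₂, then the elements s_{ω₁} = x_{ω₁}ψ_{ω₁} and s_{ω₂} = x_{ω₂}ψ_{ω₂} of the semidirect product F ⋊ Ψ commute, where Ψ ⊆ Aut(F) is the subgroup generated by the ψ_ω. -/

import Mathlib

open scoped Classical

def sqRels (Ω : Type) : Set (FreeGroup Ω) := Set.range (fun ω : Ω => FreeGroup.of ω ^ 2)

/-- `FP Ω` is the free product of copies of `ℤ/2` indexed by `Ω`. -/
abbrev FP (Ω : Type) := PresentedGroup (sqRels Ω)

def xg {Ω : Type} (ω : Ω) : FP Ω := PresentedGroup.of ω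

/-- The automorphism `ψ_ω` is determined by `ψ_ω(x_γ) = x_ω x_γ x_ω` if `γ < ω`
and `ψ_ω(x_γ) = x_γ` otherwise. -/
def IsPsiAut {Ω : Type} [PartialOrder Ω] (ω : Ω) (ψ : MulAut (FP Ω)) : Prop :=
  ∀ γ : Ω, ψ (xg γ) = if γ < ω then xg ω * xg γ * xg ω else xg γ

/-- The semidirect product `F ⋊ Aut(F)` for the tautological action; the subgroup
`F ⋊ Ψ` sits inside it, and the elements `s_ω` and the commutation relations among
them are the same in both groups. -/
abbrev GP (Ω : Type) : Type :=
  SemidirectProduct (FP Ω) (MulAut (FP Ω)) (MonoidHom.id (MulAut (FP Ω)))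

/-- The element `s_ω = x_ω · ψ_ω` of the semidirect product. -/
def sElt {Ω : Type} (ω : Ω) (ψ : MulAut (FP Ω)) : GP Ω := ⟨xg ω, ψ⟩

section

variable {Ω : Type}

theorem xg_mul_self (ω : Ω) : xg ω * xg ω = 1 := by
  rw [← pow_two]
  exact (QuotientGroup.eq_one_iff _).2 (Subgroup.subset_normalClosure ⟨ω, rfl⟩)

theorem xg_inv (ω : Ω) : (xg ω)⁻¹ = xg ω :=
  inv_eq_of_mul_eq_one_right (xg_mul_self ω)

theorem FP.mulAut_ext {φ φ' : MulAut (FP Ω)} (h : ∀ γ, φ (xg γ) = φ' (xg γ)) : φ = φ' :=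
  MulEquiv.toMonoidHom_injective (PresentedGroup.ext h)

variable [PartialOrder Ω] {ω γ : Ω} {ψ : MulAut (FP Ω)}

theorem IsPsiAut.apply_of_lt (hψ : IsPsiAut ω ψ) (hγ : γ < ω) :
    ψ (xg γ) = xg ω * xg γ * (xg ω)⁻¹ := by
  rw [hψ γ, if_pos hγ, xg_inv]

theorem IsPsiAut.apply_of_not_lt (hψ : IsPsiAut ω ψ) (hγ : ¬γ < ω) : ψ (xg γ) = xg γ := by
  rw [hψ γ, if_neg hγ]

/-- The key relation: `ψ_{ω₁}` fixes `x_{ω₂}` while `ψ_{ω₂}` conjugates `x_{ω₁}` by `x_{ω₂}`,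
so on `x_γ` with `γ < ω₁` both composites are conjugation by `x_{ω₂} x_{ω₁}`. -/
theorem IsPsiAut.commute {ω₁ ω₂ : Ω} {ψ₁ ψ₂ : MulAut (FP Ω)} (h : ω₁ < ω₂)
    (h₁ : IsPsiAut ω₁ ψ₁) (h₂ : IsPsiAut ω₂ ψ₂) : Commute ψ₁ ψ₂ := by
  have ψ₁_x₂ : ψ₁ (xg ω₂) = xg ω₂ := h₁.apply_of_not_lt h.not_gt
  refine FP.mulAut_ext fun γ => ?_
  change ψ₁ (ψ₂ (xg γ)) = ψ₂ (ψ₁ (xg γ))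
  by_cases hγ₂ : γ < ω₂
  · by_cases hγ₁ : γ < ω₁
    · simp only [h₂.apply_of_lt hγ₂, h₁.apply_of_lt hγ₁, map_mul, map_inv, ψ₁_x₂,
        h₂.apply_of_lt h]
      group
    · simp only [h₂.apply_of_lt hγ₂, h₁.apply_of_not_lt hγ₁, map_mul, map_inv, ψ₁_x₂]
  · have hγ₁ : ¬γ < ω₁ := fun hγ₁ => hγ₂ (hγ₁.trans h)
    rw [h₂.apply_of_not_lt hγ₂, h₁.apply_of_not_lt hγ₁, h₂.apply_of_not_lt hγ₂]

end

theorem sElt_commute_general (Ω : Type) [PartialOrder Ω] (ω₁ ω₂ : Ω) (h : ω₁ < ω₂)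
    (ψ₁ ψ₂ : MulAut (FP Ω)) (h₁ : IsPsiAut ω₁ ψ₁) (h₂ : IsPsiAut ω₂ ψ₂) :
    sElt ω₁ ψ₁ * sElt ω₂ ψ₂ = sElt ω₂ ψ₂ * sElt ω₁ ψ₁ := by
  refine SemidirectProduct.ext ?_ (h₁.commute h h₂).eq
  change xg ω₁ * ψ₁ (xg ω₂) = xg ω₂ * ψ₂ (xg ω₁)
  rw [h₁.apply_of_not_lt h.not_gt, h₂.apply_of_lt h, xg_inv, ← mul_assoc, ← mul_assoc,
    xg_mul_self, one_mul]

/-- If `ω₁ < ω₂`, then `s_{ω₁} = x_{ω₁}ψ_{ω₁}` and `s_{ω₂} = x_{ω₂}ψ_{ω₂}` commute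
in the semidirect product. -/
theorem sElt_commute (Ω : Type) [PartialOrder Ω] [Fintype Ω] (ω₁ ω₂ : Ω) (h : ω₁ < ω₂)
    (ψ₁ ψ₂ : MulAut (FP Ω)) (h₁ : IsPsiAut ω₁ ψ₁) (h₂ : IsPsiAut ω₂ ψ₂) :
    sElt ω₁ ψ₁ * sElt ω₂ ψ₂ = sElt ω₂ ψ₂ * sElt ω₁ ψ₁ :=
  sElt_commute_general Ω ω₁ ω₂ h ψ₁ ψ₂ h₁ h₂
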